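/- Let σ ⊂ ℝ^m be a lattice simplex of dimension d that is nonempty, i.e., σ contains a lattice point that is not a vertex. Then rdeg y ≤ d for all y ∈ M*(σ). -/

import Mathlib

open Set

noncomputable section

/-- Lift a point of `ℝ^m` to height 1 in `ℝ^(m+1)`. -/
def lift {m : ℕ} (x : Fin m → ℝ) : Fin (m + 1) → ℝ := Fin.snoc x 1

/-- A point with integer coordinates (a lattice point). -/
def isLat {n : ℕ} (x : Fin n → ℝ) : Prop := ∀ i, ∃ z : ℤ, x i = (z : ℝ)

/-- The cone `C(P)` generated by `P × {1}` (for convex `P`). -/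
def coneOf {m : ℕ} (P : Set (Fin m → ℝ)) : Set (Fin (m + 1) → ℝ) :=
  {y | ∃ (c : ℝ) (p : Fin m → ℝ), 0 ≤ c ∧ p ∈ P ∧ y = c • lift p}

/-- The semigroup `M(P)` generated by the lattice points of `P × {1}`. -/
def Msemi {m : ℕ} (P : Set (Fin m → ℝ)) : AddSubmonoid (Fin (m + 1) → ℝ) :=
  AddSubmonoid.closure {y | ∃ p ∈ P, isLat p ∧ y = lift p}

/-- `M*(P)`: the lattice points in the relative interior of `C(P)`. -/
def Mstar {m : ℕ} (P : Set (Fin m → ℝ)) : Set (Fin (m + 1) → ℝ) :=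
  {y | y ∈ intrinsicInterior ℝ (coneOf P) ∧ isLat y}

/-- The degree: the last coordinate. -/
def deg {m : ℕ} (y : Fin (m + 1) → ℝ) : ℝ := y (Fin.last m)

/-- The reduced `P`-degree of `y`. -/
def rdeg {m : ℕ} (P : Set (Fin m → ℝ)) (y : Fin (m + 1) → ℝ) : ℝ :=
  sInf {r | ∃ z w, z ∈ Mstar P ∧ w ∈ Msemi P ∧ y = z + w ∧ r = deg z}

/-- An empty lattice simplex: its only lattice points are its vertices. -/
def IsEmptyLatticeSimplex {m : ℕ} (s : Set (Fin m → ℝ)) : Prop :=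
  ∃ (k : ℕ) (x : Fin (k + 1) → (Fin m → ℝ)), AffineIndependent ℝ x ∧
    (∀ i, isLat (x i)) ∧ s = convexHull ℝ (Set.range x) ∧
    (∀ p ∈ s, isLat p → p ∈ Set.range x)

/-- A lattice triangulation of `P`: a finite face-closed family of empty lattice
simplices covering `P`, with pairwise disjoint relative interiors (every point of `P`
lies in the relative interior of exactly one simplex), and using every lattice point
of `P` as a vertex. -/
structure IsLatticeTriangulation {m : ℕ} (P : Set (Fin m → ℝ))
    (T : Set (Set (Fin m → ℝ))) : Prop where
  finite : T.Finite
  simplex : ∀ s ∈ T, IsEmptyLatticeSimplex s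
  subset : ∀ s ∈ T, s ⊆ P
  partition : ∀ p ∈ P, ∃! s, s ∈ T ∧ p ∈ intrinsicInterior ℝ s
  vertex : ∀ p ∈ P, isLat p → {p} ∈ T

/-!
Write `vᵢ = (xᵢ, 1)`. Since the `vᵢ` are linearly independent, the interior lattice points of the
cone are the lattice points `y = ∑ cᵢ vᵢ` with all `cᵢ > 0`, and `deg y = ∑ cᵢ`. If `deg y > d`,
then `deg y ≥ d + 1`, so either some `cᵢ > 1` and `y - vᵢ` is still interior, or all `cᵢ = 1` and
`y - (p, 1)` is still interior, where `p` is a non-vertex lattice point of `σ` (its barycentric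
coordinates are all `< 1`). Peeling off these degree-one generators of `M(σ)` lowers the degree
until it is at most `d`.
-/

theorem intrinsicInterior_eq_interior_of_affineSpan_eq_top {𝕜 V P : Type*} [Ring 𝕜]
    [AddCommGroup V] [Module 𝕜 V] [TopologicalSpace P] [AddTorsor V P] {s : Set P}
    (h : affineSpan 𝕜 s = ⊤) : intrinsicInterior 𝕜 s = interior s := by
  let e : affineSpan 𝕜 s ≃ₜ P :=
    (Homeomorph.setCongr (by simp [h])).trans (Homeomorph.Set.univ P)
  change e '' interior (e ⁻¹' s) = interior s
  rw [e.image_interior, e.image_preimage]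

theorem intrinsicInterior_setOf_nonneg {ι : Type*} [Fintype ι] :
    intrinsicInterior ℝ {c : ι → ℝ | ∀ i, 0 ≤ c i} = {c | ∀ i, 0 < c i} := by
  have hpi : {c : ι → ℝ | ∀ i, 0 ≤ c i} = univ.pi fun _ => Ici 0 := by ext; simp [Pi.le_def]
  have hint : interior (univ.pi fun (_ : ι) => Ici (0 : ℝ)) = {c | ∀ i, 0 < c i} := by
    rw [interior_pi_set finite_univ]; ext; simp
  rw [hpi, intrinsicInterior_eq_interior_of_affineSpan_eq_top, hint]
  refine affineSpan_eq_top_of_nonempty_interior ⟨1, ?_⟩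
  rw [(convex_pi fun _ _ => convex_Ici 0).convexHull_eq, hint]
  simp

/-- The cone is the image of the orthant under a linear isomorphism onto the span of `v`. -/
theorem LinearIndependent.intrinsicInterior_image_setOf_nonneg {ι E : Type*} [Fintype ι]
    [NormedAddCommGroup E] [NormedSpace ℝ E] {v : ι → E} (hv : LinearIndependent ℝ v) :
    intrinsicInterior ℝ (Fintype.linearCombination ℝ v '' {c | ∀ i, 0 ≤ c i}) =
      Fintype.linearCombination ℝ v '' {c | ∀ i, 0 < c i} := by
  let V := Submodule.span ℝ (range v)
  let e : (ι → ℝ) ≃ᴬ[ℝ] V :=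
    (Module.Basis.span hv).equivFun.symm.toContinuousLinearEquiv.toContinuousAffineEquiv
  have he : ∀ c, V.subtypeₗᵢ.toAffineIsometry (e c) = Fintype.linearCombination ℝ v c := by
    intro c
    simp [e, Module.Basis.equivFun_symm_apply, Module.Basis.span_apply,
      Fintype.linearCombination_apply]
  have himage : ∀ s, Fintype.linearCombination ℝ v '' s =
      V.subtypeₗᵢ.toAffineIsometry '' (e '' s) := by
    intro s; rw [image_image]; exact image_congr fun c _ => (he c).symm
  rw [himage, himage, AffineIsometry.intrinsicInterior_image,
    ContinuousAffineEquiv.intrinsicInterior_image, intrinsicInterior_setOf_nonneg]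

theorem convexHull_range_eq_image_stdSimplex {ι E : Type*} [Fintype ι] [AddCommGroup E]
    [Module ℝ E] (x : ι → E) :
    convexHull ℝ (range x) = Fintype.linearCombination ℝ x '' stdSimplex ℝ ι := by
  classical
  rw [← convexHull_rangle_single_eq_stdSimplex, LinearMap.image_convexHull, ← range_comp]
  congr 2; ext i; simp

theorem mem_convexHull_range_iff {ι E : Type*} [Fintype ι] [AddCommGroup E] [Module ℝ E]
    {x : ι → E} {p : E} :
    p ∈ convexHull ℝ (range x) ↔ ∃ t ∈ stdSimplex ℝ ι, ∑ i, t i • x i = p := by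
  simp [convexHull_range_eq_image_stdSimplex, Fintype.linearCombination_apply]

theorem eq_single_of_mem_stdSimplex {ι : Type*} [Fintype ι] [DecidableEq ι] {t : ι → ℝ}
    (ht : t ∈ stdSimplex ℝ ι) {i : ι} (hi : t i = 1) : t = Pi.single i 1 := by
  have hrest : ∑ k ∈ Finset.univ.erase i, t k = 0 := by
    have := Finset.add_sum_erase _ t (Finset.mem_univ i)
    rw [ht.2, hi] at this
    linarith
  funext j
  rcases eq_or_ne j i with rfl | hj
  · simp [hi]
  · rw [Pi.single_eq_of_ne hj]
    exact (Finset.sum_eq_zero_iff_of_nonneg fun k _ => ht.1 k).mp hrest j (by simp [hj])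

/-- Either some `c i` exceeds `1` and `Pi.single i 1` works, or the bound on the sum forces every
`c i` to be `1` and `t₀` works. -/
theorem exists_mem_forall_lt_of_card_le_sum {ι : Type*} [Fintype ι] [DecidableEq ι]
    {T : Set (ι → ℝ)} (hsingle : ∀ i, Pi.single i 1 ∈ T) {t₀ : ι → ℝ} (ht₀ : t₀ ∈ T)
    (ht₀_lt : ∀ i, t₀ i < 1) {c : ι → ℝ} (hc : ∀ i, 0 < c i)
    (hsum : (Fintype.card ι : ℝ) ≤ ∑ i, c i) : ∃ t ∈ T, ∀ i, t i < c i := by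
  by_cases h : ∃ i, 1 < c i
  · obtain ⟨i, hi⟩ := h
    refine ⟨Pi.single i 1, hsingle i, fun j => ?_⟩
    rcases eq_or_ne j i with rfl | hj
    · simpa using hi
    · simpa [hj] using hc j
  · push Not at h
    have hc1 : ∀ i, c i = 1 := by
      by_contra! ⟨i, hi⟩
      have := Finset.sum_lt_sum (fun j _ => h j) ⟨i, Finset.mem_univ i, (h i).lt_of_ne hi⟩
      simp only [Finset.sum_const, Finset.card_univ, nsmul_eq_mul, mul_one] at this
      linarith
    exact ⟨t₀, ht₀, fun i => hc1 i ▸ ht₀_lt i⟩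

theorem isLat_lift {m : ℕ} {p : Fin m → ℝ} (h : isLat p) : isLat (lift p) := by
  intro i
  refine Fin.lastCases ⟨1, by simp [lift]⟩ (fun j => ?_) i
  obtain ⟨z, hz⟩ := h j
  exact ⟨z, by simpa [lift] using hz⟩

theorem isLat_sub {n : ℕ} {a b : Fin n → ℝ} (ha : isLat a) (hb : isLat b) : isLat (a - b) := by
  intro i
  obtain ⟨z, hz⟩ := ha i
  obtain ⟨w, hw⟩ := hb i
  exact ⟨z - w, by simp [hz, hw]⟩

theorem deg_add {m : ℕ} (a b : Fin (m + 1) → ℝ) : deg (a + b) = deg a + deg b := rfl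

theorem deg_lift {m : ℕ} (p : Fin m → ℝ) : deg (lift p) = 1 := by simp [deg, lift]

theorem add_one_le_deg {m n : ℕ} {y : Fin (m + 1) → ℝ} (hy : isLat y) (hn : (n : ℝ) < deg y) :
    (n : ℝ) + 1 ≤ deg y := by
  obtain ⟨k, hk⟩ := hy (Fin.last m)
  rw [deg, hk] at hn ⊢
  exact_mod_cast Int.add_one_le_of_lt (by exact_mod_cast hn : (n : ℤ) < k)

theorem lift_mem_Msemi {m : ℕ} {P : Set (Fin m → ℝ)} {q : Fin m → ℝ} (hq : q ∈ P)
    (hlat : isLat q) : lift q ∈ Msemi P :=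
  AddSubmonoid.subset_closure ⟨q, hq, hlat, rfl⟩

section Simplex

variable {ι : Type*} [Fintype ι] {m : ℕ} {x : ι → Fin m → ℝ}

theorem sum_smul_lift (x : ι → Fin m → ℝ) (c : ι → ℝ) :
    ∑ i, c i • lift (x i) = Fin.snoc (∑ i, c i • x i) (∑ i, c i) := by
  funext j
  refine Fin.lastCases ?_ (fun k => ?_) j <;> simp [Finset.sum_apply, lift]

theorem lift_sum_smul {t : ι → ℝ} (ht : ∑ i, t i = 1) :
    lift (∑ i, t i • x i) = ∑ i, t i • lift (x i) := by
  rw [sum_smul_lift, ht]; rfl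

theorem deg_sum_smul_lift (x : ι → Fin m → ℝ) (c : ι → ℝ) :
    deg (∑ i, c i • lift (x i)) = ∑ i, c i := by
  rw [sum_smul_lift]; simp [deg]

theorem linearIndependent_lift (hx : AffineIndependent ℝ x) :
    LinearIndependent ℝ (lift ∘ x) := by
  rw [Fintype.linearIndependent_iff]
  intro g hg
  have h := congrFun (sum_smul_lift x g ▸ hg)
  refine fun i => affineIndependent_iff.mp hx Finset.univ g ?_ ?_ i (Finset.mem_univ i)
  · simpa using h (Fin.last m)
  · funext k; simpa using h k.castSucc

theorem coneOf_convexHull_range [Nonempty ι] (x : ι → Fin m → ℝ) :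
    coneOf (convexHull ℝ (range x)) =
      Fintype.linearCombination ℝ (lift ∘ x) '' {c | ∀ i, 0 ≤ c i} := by
  ext y
  simp only [coneOf, mem_image, mem_ofPred_eq, Fintype.linearCombination_apply,
    Function.comp_apply]
  constructor
  · rintro ⟨a, p, ha, hp, rfl⟩
    obtain ⟨t, ht, rfl⟩ := mem_convexHull_range_iff.mp hp
    refine ⟨fun i => a * t i, fun i => mul_nonneg ha (ht.1 i), ?_⟩
    simp [lift_sum_smul ht.2, Finset.smul_sum, mul_smul]
  · rintro ⟨c, hc, rfl⟩
    obtain hs | hs := (show 0 ≤ ∑ i, c i from Finset.sum_nonneg fun i _ => hc i).eq_or_lt'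
    · have hc0 := (Finset.sum_eq_zero_iff_of_nonneg fun i _ => hc i).mp hs
      obtain ⟨i⟩ := ‹Nonempty ι›
      refine ⟨0, x i, le_rfl, subset_convexHull ℝ _ ⟨i, rfl⟩, ?_⟩
      simp [hc0 _ (Finset.mem_univ _)]
    set s := ∑ i, c i
    have hs1 : ∑ i, s⁻¹ * c i = 1 := by rw [← Finset.mul_sum, inv_mul_cancel₀ hs.ne']
    refine ⟨s, ∑ i, (s⁻¹ * c i) • x i, hs.le, mem_convexHull_range_iff.mpr
      ⟨_, ⟨fun i => mul_nonneg (inv_nonneg.mpr hs.le) (hc i), hs1⟩, rfl⟩, ?_⟩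
    rw [lift_sum_smul hs1, Finset.smul_sum]
    simp [← mul_smul, hs.ne']

theorem mem_intrinsicInterior_coneOf_convexHull_range [Nonempty ι]
    (hx : AffineIndependent ℝ x) {y : Fin (m + 1) → ℝ} :
    y ∈ intrinsicInterior ℝ (coneOf (convexHull ℝ (range x))) ↔
      ∃ c : ι → ℝ, (∀ i, 0 < c i) ∧ ∑ i, c i • lift (x i) = y := by
  simp [coneOf_convexHull_range,
    (linearIndependent_lift hx).intrinsicInterior_image_setOf_nonneg,
    Fintype.linearCombination_apply]

theorem exists_mem_Mstar_eq_add_lift [Nonempty ι] (hx : AffineIndependent ℝ x)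
    (hxlat : ∀ i, isLat (x i)) (hne : ∃ p ∈ convexHull ℝ (range x), isLat p ∧ p ∉ range x)
    {y : Fin (m + 1) → ℝ} (hy : y ∈ Mstar (convexHull ℝ (range x)))
    (hdeg : (Fintype.card ι : ℝ) ≤ deg y) :
    ∃ z ∈ Mstar (convexHull ℝ (range x)), ∃ q ∈ convexHull ℝ (range x),
      isLat q ∧ y = z + lift q := by
  classical
  obtain ⟨hyint, hylat⟩ := hy
  obtain ⟨c, hc, rfl⟩ := (mem_intrinsicInterior_coneOf_convexHull_range hx).mp hyint
  rw [deg_sum_smul_lift] at hdeg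
  obtain ⟨p, hp, hplat, hpx⟩ := hne
  obtain ⟨t₀, ht₀, rfl⟩ := mem_convexHull_range_iff.mp hp
  have ht₀_lt : ∀ i, t₀ i < 1 := fun i =>
    (mem_Icc_of_mem_stdSimplex ht₀ i).2.lt_of_ne fun hi =>
      hpx ⟨i, by simp [eq_single_of_mem_stdSimplex ht₀ hi, Pi.single_apply]⟩
  obtain ⟨t, ⟨ht, htlat⟩, htc⟩ := exists_mem_forall_lt_of_card_le_sum
    (T := {t | t ∈ stdSimplex ℝ ι ∧ isLat (∑ i, t i • x i)})
    (fun i => ⟨single_mem_stdSimplex ℝ i, by simpa [Pi.single_apply] using hxlat i⟩)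
    ⟨ht₀, hplat⟩ ht₀_lt hc hdeg
  have hsplit : ∑ i, c i • lift (x i) =
      ∑ i, (c i - t i) • lift (x i) + lift (∑ i, t i • x i) := by
    rw [lift_sum_smul ht.2, ← Finset.sum_add_distrib]
    simp [sub_smul]
  refine ⟨_, ⟨(mem_intrinsicInterior_coneOf_convexHull_range hx).mpr
    ⟨_, fun i => sub_pos.mpr (htc i), rfl⟩, ?_⟩, _, mem_convexHull_range_iff.mpr ⟨t, ht, rfl⟩,
    htlat, hsplit⟩
  rw [eq_sub_of_add_eq hsplit.symm]
  exact isLat_sub hylat (isLat_lift htlat)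

end Simplex

/-- for a nonempty lattice `d`-simplex, `rdeg y ≤ d` for all `y ∈ M*(σ)`. -/
theorem stmt1 {m d : ℕ} (σ : Set (Fin m → ℝ)) (x : Fin (d + 1) → (Fin m → ℝ))
    (hx : AffineIndependent ℝ x) (hxlat : ∀ i, isLat (x i))
    (hσ : σ = convexHull ℝ (Set.range x))
    (hne : ∃ p ∈ σ, isLat p ∧ p ∉ Set.range x) :
    ∀ y ∈ Mstar σ, ∃ z w, z ∈ Mstar σ ∧ w ∈ Msemi σ ∧ y = z + w ∧ deg z ≤ d := by
  subst hσ
  suffices ∀ n : ℕ, ∀ y ∈ Mstar (convexHull ℝ (range x)), deg y ≤ d + n →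
      ∃ z w, z ∈ Mstar (convexHull ℝ (range x)) ∧ w ∈ Msemi (convexHull ℝ (range x)) ∧
        y = z + w ∧ deg z ≤ d from
    fun y hy => this ⌈deg y⌉₊ y hy
      (by linarith [Nat.le_ceil (deg y), (d.cast_nonneg : (0 : ℝ) ≤ d)])
  intro n
  induction n with
  | zero => exact fun y hy hdeg => ⟨y, 0, hy, zero_mem _, (add_zero y).symm, by simpa using hdeg⟩
  | succ n ih =>
    intro y hy hdeg
    by_cases hyd : deg y ≤ d
    · exact ⟨y, 0, hy, zero_mem _, (add_zero y).symm, hyd⟩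
    obtain ⟨y', hy', q, hq, hqlat, rfl⟩ := exists_mem_Mstar_eq_add_lift hx hxlat hne hy
      (by simpa using add_one_le_deg hy.2 (not_le.mp hyd))
    rw [deg_add, deg_lift, Nat.cast_succ] at hdeg
    obtain ⟨z, w, hz, hw, rfl, hzd⟩ := ih y' hy' (by linarith)
    exact ⟨z, w + lift q, hz, add_mem hw (lift_mem_Msemi hq hqlat), add_assoc z w (lift q), hzd⟩
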